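/- arXiv:2603.05298 — 3 statements merged into one kernel-verified Lean document; each statement's English description precedes it below -/
import Mathlib

section
/- Let s ∈ (0,1), p ∈ (1,∞), v ∈ L^p(ℝ^N) such that the integral defining ∇^s v converges absolutely for a.e. x, let h ∈ ℝ^N, and let φ : ℝ^N → [0,1] be a Lipschitz cut-off function equal to 1 on D_ρ(x_0) and vanishing outside D_{2ρ}(x_0). Then for a.e. x ∈ ℝ^N the integral defining ∇^s(T_h v)(x) and the commutator integral 𝒞_{φ,v}(x) := μ(N,s) ∫_{ℝ^N} (φ(x) − φ(y)) (v(y+h) − v(y)) (x − y) / |x − y|^{N+s+1} dy converge absolutely, and ∇^s(T_h v)(x) = φ(x) (∇^s v)(x+h) + (1 − φ(x)) ∇^s v(x) + 𝒞_{φ,v}(x). -/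
open MeasureTheory Metric Real
open scoped ENNReal NNReal RealInnerProductSpace

noncomputable section

/-- Euclidean space `ℝ^N`. -/
abbrev Euc (N : ℕ) := EuclideanSpace ℝ (Fin N)

/-- The normalizing constant of the Riesz fractional gradient of order `s` in dimension `N`. -/
def mu (N : ℕ) (s : ℝ) : ℝ :=
  2 ^ s * Real.Gamma (((N : ℝ) + s + 1) / 2) /
    (Real.pi ^ ((N : ℝ) / 2) * Real.Gamma ((1 - s) / 2))

/-- The integrand `(f x - f y) (x - y) / |x - y|^{N+s+1}` of the Riesz fractional gradient. -/
def gradIntegrand (N : ℕ) (s : ℝ) (f : Euc N → ℝ) (x y : Euc N) : Euc N :=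
  ((f x - f y) / ‖x - y‖ ^ ((N : ℝ) + s + 1)) • (x - y)

/-- The Riesz fractional gradient `∇^s f` (meaningful at points where the integrand is
absolutely integrable). -/
def fracGrad (N : ℕ) (s : ℝ) (f : Euc N → ℝ) (x : Euc N) : Euc N :=
  mu N s • ∫ y, gradIntegrand N s f x y

/-- A cut-off function adapted to the balls `D_ρ(x₀) ⊂ D_{2ρ}(x₀)`: Lipschitz, with values
in `[0,1]`, equal to `1` on `D_ρ(x₀)` and vanishing outside `D_{2ρ}(x₀)`. -/
def IsCutoff (N : ℕ) (x₀ : Euc N) (ρ : ℝ) (φ : Euc N → ℝ) : Prop :=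
  (∃ L : ℝ≥0, LipschitzWith L φ) ∧ (∀ x, φ x ∈ Set.Icc (0 : ℝ) 1) ∧
    (∀ x ∈ Metric.ball x₀ ρ, φ x = 1) ∧ (∀ x ∉ Metric.ball x₀ (2 * ρ), φ x = 0)

/-- The localized translation `T_h v := φ v_h + (1 - φ) v`. -/
def locTrans (N : ℕ) (φ : Euc N → ℝ) (h : Euc N) (v : Euc N → ℝ) (x : Euc N) : ℝ :=
  φ x * v (x + h) + (1 - φ x) * v x

/-- The integrand `(φ(x) - φ(y)) (v(y+h) - v(y)) (x - y)/|x-y|^{N+s+1}` of the fracComm. -/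
def commIntegrand (N : ℕ) (s : ℝ) (φ v : Euc N → ℝ) (h : Euc N) (x y : Euc N) : Euc N :=
  (((φ x - φ y) * (v (y + h) - v y)) / ‖x - y‖ ^ ((N : ℝ) + s + 1)) • (x - y)

/-- The fracComm `𝒞_{φ,v}` arising from the fractional gradient of a localized
translation. -/
def fracComm (N : ℕ) (s : ℝ) (φ v : Euc N → ℝ) (h : Euc N) (x : Euc N) : Euc N :=
  mu N s • ∫ y, commIntegrand N s φ v h x y



lemma aux_cover {t : ℝ} (ht0 : 0 < t) (ht1 : t < 1) :
    ∃ k : ℕ, ((2:ℝ) ^ (k+1))⁻¹ < t ∧ t ≤ ((2:ℝ) ^ k)⁻¹ := by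
  have hinv : (1:ℝ) < t⁻¹ := by rw [lt_inv_comm₀] <;> simpa
  refine ⟨⌊Real.logb 2 t⁻¹⌋₊, ?_, ?_⟩
  · have h2 : Real.logb 2 t⁻¹ < (⌊Real.logb 2 t⁻¹⌋₊ + 1 : ℕ) := by
      push_cast; exact Nat.lt_floor_add_one _
    have : t⁻¹ < (2:ℝ) ^ ((⌊Real.logb 2 t⁻¹⌋₊ + 1 : ℕ) : ℝ) := by
      calc t⁻¹ = (2:ℝ) ^ Real.logb 2 t⁻¹ := (Real.rpow_logb two_pos (by norm_num) (by positivity)).symm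
      _ < _ := Real.rpow_lt_rpow_of_exponent_lt one_lt_two h2
    rw [Real.rpow_natCast] at this
    rw [inv_lt_comm₀ (by positivity) ht0]
    exact this
  · have h1 : (⌊Real.logb 2 t⁻¹⌋₊ : ℝ) ≤ Real.logb 2 t⁻¹ :=
      Nat.floor_le (Real.logb_nonneg one_lt_two hinv.le)
    have : (2:ℝ) ^ ((⌊Real.logb 2 t⁻¹⌋₊ : ℕ) : ℝ) ≤ t⁻¹ := by
      calc (2:ℝ) ^ ((⌊Real.logb 2 t⁻¹⌋₊ : ℕ) : ℝ) ≤ (2:ℝ) ^ Real.logb 2 t⁻¹ :=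
        Real.rpow_le_rpow_of_exponent_le one_le_two h1
      _ = t⁻¹ := Real.rpow_logb two_pos (by norm_num) (by positivity)
    rw [Real.rpow_natCast] at this
    rw [le_inv_comm₀ ht0 (by positivity)]
    exact this

lemma aux_intball (N : ℕ) (hN : 1 ≤ N) {a : ℝ} (ha : 0 < a) (haN : a < N) :
    IntegrableOn (fun z : Euc N => ‖z‖ ^ (-a)) (Metric.ball 0 1) volume := by
  haveI : Nonempty (Fin N) := ⟨⟨0, hN⟩⟩
  haveI : NullSingletonClass (volume : Measure (Euc N)) := by infer_instance
  have hmeas : Measurable (fun z : Euc N => ‖z‖ ^ (-a)) := measurable_norm.pow_const _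
  constructor
  · exact hmeas.aestronglyMeasurable.restrict
  · rw [hasFiniteIntegral_iff_ofReal (Filter.Eventually.of_forall fun z =>
      Real.rpow_nonneg (norm_nonneg _) _)]
    set S : ℕ → Set (Euc N) := fun k => {z | ((2:ℝ) ^ (k+1))⁻¹ < ‖z‖ ∧ ‖z‖ ≤ ((2:ℝ) ^ k)⁻¹}
      with hS
    have hsub : Metric.ball (0 : Euc N) 1 ⊆ {0} ∪ ⋃ k, S k := by
      intro z hz
      rcases eq_or_ne z 0 with rfl | hz0
      · exact Or.inl rfl
      · refine Or.inr ?_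
        have h1 : ‖z‖ < 1 := by simpa using hz
        obtain ⟨k, hk1, hk2⟩ := aux_cover (norm_pos_iff.2 hz0) h1
        exact Set.mem_iUnion.2 ⟨k, hk1, hk2⟩
    refine lt_of_le_of_lt (lintegral_mono_set hsub) ?_
    refine lt_of_le_of_lt (lintegral_union_le _ _ _) ?_
    have h0 : ∫⁻ z in ({0} : Set (Euc N)), ENNReal.ofReal (‖z‖ ^ (-a)) ∂volume = 0 := by
      rw [setLIntegral_measure_zero _ _ (measure_singleton 0)]
    rw [h0, zero_add]
    refine lt_of_le_of_lt (lintegral_iUnion_le _ _) ?_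
    have two_pos' : (0:ℝ) < 2 := two_pos
    set V := volume (Metric.ball (0 : Euc N) 1) with hV
    have hVlt : V < ⊤ := measure_ball_lt_top
    have hbd : ∀ k : ℕ, ∫⁻ z in S k, ENNReal.ofReal (‖z‖ ^ (-a)) ∂volume ≤
        (ENNReal.ofReal ((2:ℝ) ^ a) * V) * (ENNReal.ofReal ((2:ℝ) ^ (a - N))) ^ k := by
      intro k
      have hck : (0:ℝ) < ((2:ℝ) ^ k)⁻¹ := by positivity
      have hck1 : (0:ℝ) < ((2:ℝ) ^ (k+1))⁻¹ := by positivity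
      have hstep : ∀ z ∈ S k, ENNReal.ofReal (‖z‖ ^ (-a)) ≤
          ENNReal.ofReal ((((2:ℝ) ^ (k+1))⁻¹) ^ (-a)) := fun z hz =>
        ENNReal.ofReal_le_ofReal
          (Real.rpow_le_rpow_of_nonpos hck1 hz.1.le (neg_nonpos.2 ha.le))
      have harith : (((2:ℝ) ^ (k+1))⁻¹) ^ (-a) * ((2:ℝ) ^ k)⁻¹ ^ N
          = (2:ℝ) ^ a * ((2:ℝ) ^ (a - (N:ℝ))) ^ k := by
        have e1 : (((2:ℝ) ^ (k+1))⁻¹) ^ (-a) = (2:ℝ) ^ (((k:ℝ)+1) * a) := by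
          rw [Real.inv_rpow (by positivity), Real.rpow_neg (by positivity), inv_inv,
            ← Real.rpow_natCast (2:ℝ) (k+1), ← Real.rpow_mul two_pos'.le]
          push_cast; ring_nf
        have e2 : ((2:ℝ) ^ k)⁻¹ ^ N = (2:ℝ) ^ (-((k:ℝ) * N)) := by
          rw [inv_pow, ← pow_mul, ← Real.rpow_natCast (2:ℝ) (k*N), ← Real.rpow_neg two_pos'.le]
          push_cast; ring_nf
        have e3 : ((2:ℝ) ^ (a - (N:ℝ))) ^ k = (2:ℝ) ^ ((a - (N:ℝ)) * k) := by
          rw [← Real.rpow_natCast ((2:ℝ) ^ (a - (N:ℝ))) k, ← Real.rpow_mul two_pos'.le]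
        rw [e1, e2, e3, ← Real.rpow_add two_pos', ← Real.rpow_add two_pos']
        congr 1; ring
      calc ∫⁻ z in S k, ENNReal.ofReal (‖z‖ ^ (-a)) ∂volume
          ≤ ∫⁻ _ in S k, ENNReal.ofReal ((((2:ℝ) ^ (k+1))⁻¹) ^ (-a)) ∂volume :=
            setLIntegral_mono measurable_const hstep
        _ = ENNReal.ofReal ((((2:ℝ) ^ (k+1))⁻¹) ^ (-a)) * volume (S k) := setLIntegral_const _ _
        _ ≤ ENNReal.ofReal ((((2:ℝ) ^ (k+1))⁻¹) ^ (-a)) *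
            (ENNReal.ofReal (((2:ℝ) ^ k)⁻¹ ^ N) * V) := by
            gcongr
            calc volume (S k) ≤ volume (Metric.closedBall (0 : Euc N) (((2:ℝ) ^ k)⁻¹)) := by
                  apply measure_mono; intro z hz
                  simpa [Metric.mem_closedBall, dist_zero_right] using hz.2
              _ = ENNReal.ofReal (((2:ℝ) ^ k)⁻¹ ^ N) * V := by
                  rw [Measure.addHaar_closedBall _ _ hck.le, finrank_euclideanSpace_fin, hV]
        _ = (ENNReal.ofReal ((2:ℝ) ^ a) * V) * (ENNReal.ofReal ((2:ℝ) ^ (a - N))) ^ k := by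
            rw [← mul_assoc, ← ENNReal.ofReal_mul (by positivity), harith,
              ENNReal.ofReal_mul (by positivity), ← ENNReal.ofReal_pow (by positivity)]
            ring
    refine lt_of_le_of_lt (ENNReal.tsum_le_tsum hbd) ?_
    rw [ENNReal.tsum_mul_left, ENNReal.tsum_geometric]
    refine ENNReal.mul_lt_top (ENNReal.mul_lt_top ENNReal.ofReal_lt_top hVlt) ?_
    refine ENNReal.inv_lt_top.2 (tsub_pos_of_lt ?_)
    exact ENNReal.ofReal_lt_one.2 (Real.rpow_lt_one_of_one_lt_of_neg one_lt_two (by linarith))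


lemma aux_K_integrable (N : ℕ) (hN : 1 ≤ N) {s : ℝ} (hs0 : 0 < s) (hs1 : s < 1) (L : ℝ≥0) :
    Integrable (fun z : Euc N => min ((L:ℝ) * ‖z‖) 1 / ‖z‖ ^ ((N:ℝ) + s)) volume := by
  have hNr : (1:ℝ) ≤ N := by exact_mod_cast hN
  have hmeas : Measurable (fun z : Euc N => min ((L:ℝ) * ‖z‖) 1 / ‖z‖ ^ ((N:ℝ) + s)) :=
    ((measurable_norm.const_mul _).min measurable_const).div (measurable_norm.pow_const _)
  rw [← integrableOn_univ, ← Set.union_compl_self (Metric.ball (0:Euc N) 1)]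
  refine IntegrableOn.union ?_ ?_
  · -- near the origin
    have ha : (0:ℝ) < (N:ℝ) + s - 1 := by linarith
    have haN : (N:ℝ) + s - 1 < N := by linarith
    refine ((aux_intball N hN ha haN).const_mul (L:ℝ)).mono'
      hmeas.aestronglyMeasurable.restrict ?_
    refine Filter.Eventually.of_forall fun z => ?_
    rcases eq_or_ne z 0 with rfl | hz0
    · simp [Real.zero_rpow (by positivity : ((N:ℝ) + s) ≠ 0),
        Real.zero_rpow (by intro hc; linarith [neg_eq_zero.1 hc] : -((N:ℝ) + s - 1) ≠ 0)]
      rw [Real.zero_rpow (by intro hc; linarith : (1:ℝ) - ((N:ℝ) + s) ≠ 0)]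
      simp
    · have hz : (0:ℝ) < ‖z‖ := norm_pos_iff.2 hz0
      have hd : (0:ℝ) < ‖z‖ ^ ((N:ℝ) + s) := Real.rpow_pos_of_pos hz _
      have hnn : (0:ℝ) ≤ min ((L:ℝ) * ‖z‖) 1 :=
        le_min (by positivity) zero_le_one
      rw [Real.norm_eq_abs, abs_of_nonneg (div_nonneg hnn hd.le)]
      calc min ((L:ℝ) * ‖z‖) 1 / ‖z‖ ^ ((N:ℝ) + s)
          ≤ ((L:ℝ) * ‖z‖) / ‖z‖ ^ ((N:ℝ) + s) := by gcongr; exact min_le_left _ _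
        _ = (L:ℝ) * (‖z‖ / ‖z‖ ^ ((N:ℝ) + s)) := by ring
        _ = (L:ℝ) * ‖z‖ ^ (-((N:ℝ) + s - 1)) := by
            rw [show -((N:ℝ) + s - 1) = 1 - ((N:ℝ) + s) by ring, Real.rpow_sub hz,
              Real.rpow_one]
  · -- away from the origin
    have hb : (0:ℝ) < (N:ℝ) + s := by linarith
    have hint : Integrable (fun z : Euc N => (2:ℝ) ^ ((N:ℝ)+s) * (1 + ‖z‖) ^ (-((N:ℝ)+s)))
        volume := by
      refine (integrable_one_add_norm ?_).const_mul _
      rw [finrank_euclideanSpace_fin]; linarith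
    refine hint.integrableOn.mono' hmeas.aestronglyMeasurable.restrict ?_
    filter_upwards [ae_restrict_mem (measurableSet_ball.compl)] with z hz
    have h1 : (1:ℝ) ≤ ‖z‖ := by
      simpa [Metric.mem_ball, dist_zero_right] using hz
    have hzpos : (0:ℝ) < ‖z‖ := lt_of_lt_of_le one_pos h1
    have hd : (0:ℝ) < ‖z‖ ^ ((N:ℝ) + s) := Real.rpow_pos_of_pos hzpos _
    have hnn : (0:ℝ) ≤ min ((L:ℝ) * ‖z‖) 1 := le_min (by positivity) zero_le_one
    rw [Real.norm_eq_abs, abs_of_nonneg (div_nonneg hnn hd.le)]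
    calc min ((L:ℝ) * ‖z‖) 1 / ‖z‖ ^ ((N:ℝ) + s)
        ≤ 1 / ‖z‖ ^ ((N:ℝ) + s) := by gcongr; exact min_le_right _ _
      _ ≤ (2:ℝ) ^ ((N:ℝ)+s) * (1 + ‖z‖) ^ (-((N:ℝ)+s)) := by
          rw [Real.rpow_neg (by positivity), ← div_eq_mul_inv]
          rw [div_le_div_iff₀ hd (Real.rpow_pos_of_pos (by positivity) _)]
          calc 1 * (1 + ‖z‖) ^ ((N:ℝ)+s) ≤ (2 * ‖z‖) ^ ((N:ℝ)+s) := by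
                rw [one_mul]
                exact Real.rpow_le_rpow (by positivity) (by linarith) hb.le
            _ = (2:ℝ) ^ ((N:ℝ)+s) * ‖z‖ ^ ((N:ℝ)+s) :=
                Real.mul_rpow (by norm_num) (norm_nonneg _)



lemma aux_le_one_add_rpow (w : ℝ≥0∞) {p : ℝ} (hp : 1 ≤ p) : w ≤ 1 + w ^ p := by
  rcases le_or_gt w 1 with hw | hw
  · exact hw.trans (le_add_of_nonneg_right (by positivity))
  · calc w = w ^ (1:ℝ) := (ENNReal.rpow_one w).symm
      _ ≤ w ^ p := ENNReal.rpow_le_rpow_of_exponent_le hw.le hp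
      _ ≤ 1 + w ^ p := le_add_of_nonneg_left (by positivity)

lemma aux_conv (N : ℕ) {p : ℝ} (hp : 1 < p) {K w : Euc N → ℝ}
    (hKi : Integrable K volume) (hKm : Measurable K) (hK0 : ∀ z, 0 ≤ K z)
    (hw : MemLp w (ENNReal.ofReal p) volume) :
    ∀ᵐ x ∂(volume : Measure (Euc N)), Integrable (fun y => K (x - y) * w y) volume := by
  -- reduce to a strongly measurable representative
  obtain ⟨wm, hwm_sm, hww⟩ : ∃ wm, StronglyMeasurable wm ∧ w =ᵐ[volume] wm :=
    ⟨hw.1.mk w, hw.1.stronglyMeasurable_mk, hw.1.ae_eq_mk⟩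
  have hwmm : Measurable wm := hwm_sm.measurable
  have hwmem : MemLp wm (ENNReal.ofReal p) volume := hw.ae_eq hww
  suffices H : ∀ᵐ x ∂(volume : Measure (Euc N)), Integrable (fun y => K (x - y) * wm y) volume by
    filter_upwards [H] with x hx
    exact hx.congr (by filter_upwards [hww] with y hy; rw [hy])
  -- ENNReal versions
  set KE : Euc N → ℝ≥0∞ := fun z => ENNReal.ofReal (K z) with hKE
  have hKEm : Measurable KE := hKm.ennreal_ofReal
  have hIK : ∫⁻ z, KE z ∂volume < ⊤ := by
    have := hKi.2
    rw [hasFiniteIntegral_iff_ofReal (Filter.Eventually.of_forall hK0)] at this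
    exact this
  set U : Euc N → ℝ≥0∞ := fun y => (‖wm y‖₊ : ℝ≥0∞) ^ p with hU
  have hUm : Measurable U := hwmm.nnnorm.coe_nnreal_ennreal.pow_const _
  have hIU : ∫⁻ y, U y ∂volume < ⊤ := by
    have h0 : (ENNReal.ofReal p) ≠ 0 := by
      simp [ENNReal.ofReal_eq_zero]; linarith
    have := hwmem.2
    rw [eLpNorm_eq_eLpNorm' h0 ENNReal.ofReal_ne_top,
      ENNReal.toReal_ofReal (by linarith)] at this
    exact lintegral_rpow_enorm_lt_top_of_eLpNorm'_lt_top (by linarith) this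
  -- the convolution K ∗ U is a.e. finite
  set G : Euc N → ℝ≥0∞ := fun x => ∫⁻ y, KE (x - y) * U y ∂volume with hG
  have hFm : Measurable (Function.uncurry fun (x y : Euc N) => KE (x - y) * U y) :=
    ((hKEm.comp (measurable_fst.sub measurable_snd)).mul (hUm.comp measurable_snd))
  have hGm : Measurable G := Measurable.lintegral_prod_right hFm
  have hGfin : ∫⁻ x, G x ∂volume < ⊤ := by
    have hswap : ∫⁻ x, G x ∂volume = ∫⁻ y, ∫⁻ x, KE (x - y) * U y ∂volume ∂volume :=
      lintegral_lintegral_swap hFm.aemeasurable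
    rw [hswap]
    have : ∀ y : Euc N, ∫⁻ x, KE (x - y) * U y ∂volume = U y * ∫⁻ z, KE z ∂volume := by
      intro y
      have hm1 : Measurable fun x : Euc N => KE (x - y) :=
        hKEm.comp (measurable_id.sub measurable_const)
      rw [lintegral_mul_const _ hm1, mul_comm]
      congr 1
      have := lintegral_add_right_eq_self (μ := (volume : Measure (Euc N))) KE (-y)
      simpa [sub_eq_add_neg] using this
    simp_rw [this]
    rw [lintegral_mul_const _ hUm]
    exact ENNReal.mul_lt_top hIU hIK
  have hae : ∀ᵐ x ∂(volume : Measure (Euc N)), G x < ⊤ := ae_lt_top hGm hGfin.ne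
  filter_upwards [hae] with x hx
  constructor
  · exact ((hKm.comp (measurable_const.sub measurable_id)).mul hwmm).aestronglyMeasurable
  · rw [hasFiniteIntegral_def]
    have hpt : ∀ y : Euc N, (‖K (x - y) * wm y‖₊ : ℝ≥0∞) = KE (x - y) * (‖wm y‖₊ : ℝ≥0∞) := by
      intro y
      rw [nnnorm_mul, ENNReal.coe_mul]
      congr 1
      exact Real.enorm_eq_ofReal (hK0 _)
    calc ∫⁻ y, (‖K (x - y) * wm y‖₊ : ℝ≥0∞) ∂volume
        = ∫⁻ y, KE (x - y) * (‖wm y‖₊ : ℝ≥0∞) ∂volume := by simp_rw [hpt]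
      _ ≤ ∫⁻ y, KE (x - y) * (1 + U y) ∂volume := by
          refine lintegral_mono fun y => ?_
          exact mul_le_mul_right (aux_le_one_add_rpow _ hp.le) _
      _ = ∫⁻ y, (KE (x - y) + KE (x - y) * U y) ∂volume := by
          simp_rw [mul_add, mul_one]
      _ = (∫⁻ y, KE (x - y) ∂volume) + G x := by
          have hm2 : Measurable fun y : Euc N => KE (x - y) :=
            hKEm.comp (measurable_const.sub measurable_id)
          rw [lintegral_add_left hm2]
      _ < ⊤ := by
          refine ENNReal.add_lt_top.2 ⟨?_, hx⟩
          have : ∫⁻ y, KE (x - y) ∂volume = ∫⁻ z, KE z ∂volume :=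
            (Measure.measurePreserving_sub_left volume x).lintegral_comp_emb
              (MeasurableEquiv.subLeft x).measurableEmbedding KE
          rw [this]; exact hIK

/-- The fractional gradient of a localized translation equals the localized translation of the
gradient plus a fracComm: `∇^s(T_h v) = φ (∇^s v)(·+h) + (1-φ) ∇^s v + 𝒞_{φ,v}` a.e. -/
theorem stmt3 (N : ℕ) (hN : 1 ≤ N) (s p : ℝ) (hs : s ∈ Set.Ioo (0 : ℝ) 1) (hp : 1 < p)
    (v : Euc N → ℝ) (hv : MemLp v (ENNReal.ofReal p))
    (hgrad : ∀ᵐ x ∂(volume : Measure (Euc N)), Integrable (gradIntegrand N s v x))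
    (x₀ : Euc N) (ρ : ℝ) (hρ : 0 < ρ) (φ : Euc N → ℝ) (hcut : IsCutoff N x₀ ρ φ)
    (h : Euc N) :
    ∀ᵐ x ∂(volume : Measure (Euc N)),
      Integrable (gradIntegrand N s (locTrans N φ h v) x) ∧
      Integrable (commIntegrand N s φ v h x) ∧
      fracGrad N s (locTrans N φ h v) x
        = φ x • fracGrad N s v (x + h) + (1 - φ x) • fracGrad N s v x
          + fracComm N s φ v h x := by
  obtain ⟨hs0, hs1⟩ := hs
  obtain ⟨⟨L, hL⟩, hφ01, -, -⟩ := hcut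
  have hφc : Continuous φ := hL.continuous
  have hmp : MeasurePreserving (fun x : Euc N => x + h) volume volume :=
    measurePreserving_add_right volume h
  have hemb : MeasurableEmbedding (fun x : Euc N => x + h) :=
    (MeasurableEquiv.addRight h).measurableEmbedding
  have hvh : MemLp (fun y : Euc N => v (y + h)) (ENNReal.ofReal p) volume :=
    hv.comp_measurePreserving hmp
  have hwmem : MemLp (fun y : Euc N => v (y + h) - v y) (ENNReal.ofReal p) volume :=
    hvh.sub hv
  set K : Euc N → ℝ := fun z => min ((L:ℝ) * ‖z‖) 1 / ‖z‖ ^ ((N:ℝ) + s) with hKdef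
  have hKi : Integrable K volume := aux_K_integrable N hN hs0 hs1 L
  have hKm : Measurable K :=
    ((measurable_norm.const_mul _).min measurable_const).div (measurable_norm.pow_const _)
  have hK0 : ∀ z, 0 ≤ K z := fun z =>
    div_nonneg (le_min (by positivity) zero_le_one) (Real.rpow_nonneg (norm_nonneg _) _)
  have hconv := aux_conv N hp hKi hKm hK0 hwmem
  have hgrad_h : ∀ᵐ x ∂(volume : Measure (Euc N)), Integrable (gradIntegrand N s v (x + h)) :=
    hmp.quasiMeasurePreserving.tendsto_ae.eventually hgrad
  filter_upwards [hgrad, hgrad_h, hconv] with x h1 h2 h3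
  -- pointwise bound for the commutator integrand
  have hbound : ∀ y : Euc N, ‖commIntegrand N s φ v h x y‖ ≤
      ‖K (x - y) * (v (y + h) - v y)‖ := by
    intro y
    rcases eq_or_ne x y with rfl | hxy
    · simp only [commIntegrand, sub_self, smul_zero, norm_zero]
      exact norm_nonneg _
    · have hxy0 : (0:ℝ) < ‖x - y‖ := by rwa [norm_pos_iff, sub_ne_zero]
      have hd : (0:ℝ) < ‖x - y‖ ^ ((N:ℝ) + s) := Real.rpow_pos_of_pos hxy0 _
      have hA : |φ x - φ y| ≤ min ((L:ℝ) * ‖x - y‖) 1 := by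
        refine le_min ?_ ?_
        · have := hL.dist_le_mul x y
          rwa [Real.dist_eq, dist_eq_norm] at this
        · obtain ⟨h0x, h1x⟩ := hφ01 x
          obtain ⟨h0y, h1y⟩ := hφ01 y
          rw [abs_le]; constructor <;> linarith
      have hsplit : ‖x - y‖ ^ ((N:ℝ) + s + 1) = ‖x - y‖ ^ ((N:ℝ) + s) * ‖x - y‖ := by
        rw [Real.rpow_add hxy0, Real.rpow_one]
      rw [commIntegrand, norm_smul, Real.norm_eq_abs, abs_div, abs_mul,
        abs_of_nonneg (Real.rpow_nonneg (norm_nonneg _) _), Real.norm_eq_abs (K _ * _),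
        abs_mul, abs_of_nonneg (hK0 _), hsplit, hKdef]
      calc |φ x - φ y| * |v (y + h) - v y| / (‖x - y‖ ^ ((N:ℝ) + s) * ‖x - y‖) * ‖x - y‖
          = |φ x - φ y| * |v (y + h) - v y| / ‖x - y‖ ^ ((N:ℝ) + s) := by
            rw [div_mul_eq_mul_div, mul_comm (‖x - y‖ ^ ((N:ℝ) + s)) ‖x - y‖, ← div_div,
              mul_div_assoc, div_self hxy0.ne', mul_one]
        _ ≤ min ((L:ℝ) * ‖x - y‖) 1 * |v (y + h) - v y| / ‖x - y‖ ^ ((N:ℝ) + s) := by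
            gcongr
        _ = min ((L:ℝ) * ‖x - y‖) 1 / ‖x - y‖ ^ ((N:ℝ) + s) * |v (y + h) - v y| := by
            ring
  -- the commutator is integrable
  have hcomm_aesm : AEStronglyMeasurable (commIntegrand N s φ v h x) volume := by
    have hsc : AEMeasurable (fun y : Euc N =>
        ((φ x - φ y) * (v (y + h) - v y)) / ‖x - y‖ ^ ((N:ℝ) + s + 1)) volume := by
      refine AEMeasurable.div ?_ ?_
      · exact (aemeasurable_const.sub hφc.measurable.aemeasurable).mul hwmem.1.aemeasurable
      · exact ((measurable_const.sub measurable_id).norm.pow_const _).aemeasurable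
    have : AEMeasurable (commIntegrand N s φ v h x) volume := by
      unfold commIntegrand
      exact hsc.smul ((measurable_const.sub measurable_id).aemeasurable)
    exact this.aestronglyMeasurable
  have hcommInt : Integrable (commIntegrand N s φ v h x) volume :=
    h3.norm.mono' hcomm_aesm (Filter.Eventually.of_forall hbound)
  -- translate of the gradient integrand is integrable
  have hint1 : Integrable (fun y : Euc N => gradIntegrand N s v (x + h) (y + h)) volume := by
    have := (hmp.integrable_comp_emb hemb (g := gradIntegrand N s v (x + h))).2 h2
    exact this
  -- the decomposition identity
  have hdecomp : gradIntegrand N s (locTrans N φ h v) x = fun y =>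
      φ x • gradIntegrand N s v (x + h) (y + h) + (1 - φ x) • gradIntegrand N s v x y
        + commIntegrand N s φ v h x y := by
    funext y
    have hxy : x + h - (y + h) = x - y := by abel
    simp only [gradIntegrand, commIntegrand, locTrans, hxy, smul_smul]
    rw [← mul_div_assoc, ← mul_div_assoc, ← add_smul, ← add_smul, ← add_div,
      ← add_div]
    congr 1
    ring
  have hintAll : Integrable (gradIntegrand N s (locTrans N φ h v) x) volume := by
    rw [hdecomp]
    exact ((hint1.smul (φ x)).add (h1.smul ((1:ℝ) - φ x))).add hcommInt
  refine ⟨hintAll, hcommInt, ?_⟩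
  have hI : (∫ y, gradIntegrand N s (locTrans N φ h v) x y) =
      φ x • (∫ y, gradIntegrand N s v (x + h) y) + (1 - φ x) • (∫ y, gradIntegrand N s v x y)
        + ∫ y, commIntegrand N s φ v h x y := by
    calc (∫ y, gradIntegrand N s (locTrans N φ h v) x y)
        = ∫ y, (φ x • gradIntegrand N s v (x + h) (y + h)
            + (1 - φ x) • gradIntegrand N s v x y + commIntegrand N s φ v h x y) := by
          rw [hdecomp]
      _ = (∫ y, (φ x • gradIntegrand N s v (x + h) (y + h)
            + (1 - φ x) • gradIntegrand N s v x y)) + ∫ y, commIntegrand N s φ v h x y :=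
          integral_add ((hint1.smul (φ x)).add (h1.smul ((1:ℝ) - φ x))) hcommInt
      _ = (∫ y, φ x • gradIntegrand N s v (x + h) (y + h))
            + (∫ y, (1 - φ x) • gradIntegrand N s v x y) + ∫ y, commIntegrand N s φ v h x y := by
          congr 1
          exact integral_add (hint1.smul (φ x)) (h1.smul ((1:ℝ) - φ x))
      _ = φ x • (∫ y, gradIntegrand N s v (x + h) (y + h))
            + (1 - φ x) • (∫ y, gradIntegrand N s v x y) + ∫ y, commIntegrand N s φ v h x y := by
          rw [integral_smul, integral_smul]
      _ = φ x • (∫ y, gradIntegrand N s v (x + h) y)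
            + (1 - φ x) • (∫ y, gradIntegrand N s v x y) + ∫ y, commIntegrand N s φ v h x y := by
          rw [hmp.integral_comp hemb (gradIntegrand N s v (x + h))]
  show fracGrad N s (locTrans N φ h v) x = _
  rw [fracGrad, fracGrad, fracGrad, fracComm, hI, smul_add, smul_add, smul_smul, smul_smul,
    mul_comm (mu N s) (φ x), mul_comm (mu N s) (1 - φ x), ← smul_smul, ← smul_smul]
end
end

section
/- Let p ∈ [1,∞), m ≥ 1, x_0 ∈ ℝ^N, ρ > 0, let φ : ℝ^N → [0,1] be a Lipschitz cut-off with Lipschitz constant L, equal to 1 on D_ρ(x_0) and vanishing outside D_{2ρ}(x_0), and let h ∈ ℝ^N with |h| ≤ ρ. Then for every u ∈ L^p(ℝ^N; ℝ^m): ∫_{ℝ^N} ( |T_h u(x)|^p − |u(x)|^p ) dx ≤ L |h| ‖u‖_{L^p(D_{3ρ}(x_0))}^p, where T_h u := φ u_h + (1 − φ) u. -/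
open MeasureTheory Metric Real
open scoped ENNReal NNReal

noncomputable section

/-- The (vector-valued) localized translation `T_h u := φ u_h + (1 - φ) u`. -/
def locTransV (N m : ℕ) (φ : Euc N → ℝ) (h : Euc N) (u : Euc N → Euc m) (x : Euc N) : Euc m :=
  φ x • u (x + h) + (1 - φ x) • u x

/-- Translation estimate: for a Lipschitz cut-off `φ` with constant `L` adapted to
`D_ρ(x₀) ⊂ D_{2ρ}(x₀)` and `|h| ≤ ρ`,
`∫ (|T_h u|^p - |u|^p) ≤ L |h| ‖u‖_{L^p(D_{3ρ}(x₀))}^p`. -/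
theorem stmt8 (N m : ℕ) (hN : 1 ≤ N) (hm : 1 ≤ m) (p : ℝ) (hp : 1 ≤ p)
    (x₀ : Euc N) (ρ : ℝ) (hρ : 0 < ρ) (φ : Euc N → ℝ) (L : ℝ≥0)
    (hφL : LipschitzWith L φ) (hrange : ∀ x, φ x ∈ Set.Icc (0 : ℝ) 1)
    (hone : ∀ x ∈ Metric.ball x₀ ρ, φ x = 1)
    (hzero : ∀ x ∉ Metric.ball x₀ (2 * ρ), φ x = 0)
    (h : Euc N) (hh : ‖h‖ ≤ ρ)
    (u : Euc N → Euc m) (hu : MemLp u (ENNReal.ofReal p)) :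
    ∫ x, (‖locTransV N m φ h u x‖ ^ p - ‖u x‖ ^ p)
      ≤ (L : ℝ) * ‖h‖ * ∫ x in Metric.ball x₀ (3 * ρ), ‖u x‖ ^ p := by
  have hp0 : (0:ℝ) < p := lt_of_lt_of_le one_pos hp
  set g : Euc N → ℝ := fun x => ‖u x‖ ^ p with hgdef
  -- basic integrability
  have hgi : Integrable g := by
    have := hu.integrable_norm_rpow (ENNReal.ofReal_pos.2 hp0).ne' ENNReal.ofReal_ne_top
    simpa [hgdef, ENNReal.toReal_ofReal hp0.le] using this
  have hgnn : ∀ x, 0 ≤ g x := fun x => Real.rpow_nonneg (norm_nonneg _) p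
  have hmp : MeasurePreserving (fun x : Euc N => x + h) volume volume :=
    measurePreserving_add_right volume h
  have hgh : Integrable (fun x => g (x + h)) :=
    (hmp.integrable_comp hgi.1).2 hgi
  have hφc : Continuous φ := hφL.continuous
  have hφb : ∃ C, ∀ x, ‖φ x‖ ≤ C := ⟨1, fun x => by
    rw [Real.norm_eq_abs, abs_of_nonneg (hrange x).1]; exact (hrange x).2⟩
  have huh : AEStronglyMeasurable (fun x => u (x + h)) volume :=
    hu.aestronglyMeasurable.comp_quasiMeasurePreserving hmp.quasiMeasurePreserving
  have hTm : AEStronglyMeasurable (locTransV N m φ h u) volume := by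
    unfold locTransV
    exact (hφc.aestronglyMeasurable.smul huh).add
      ((continuous_const.sub hφc).aestronglyMeasurable.smul hu.aestronglyMeasurable)
  -- pointwise convexity bound
  have key : ∀ x, ‖locTransV N m φ h u x‖ ^ p ≤ φ x * g (x + h) + (1 - φ x) * g x := by
    intro x
    obtain ⟨h0, h1⟩ := hrange x
    have hnorm : ‖locTransV N m φ h u x‖ ≤ φ x * ‖u (x + h)‖ + (1 - φ x) * ‖u x‖ := by
      calc ‖locTransV N m φ h u x‖ ≤ ‖φ x • u (x + h)‖ + ‖(1 - φ x) • u x‖ :=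
            norm_add_le _ _
        _ = φ x * ‖u (x + h)‖ + (1 - φ x) * ‖u x‖ := by
            rw [norm_smul, norm_smul, Real.norm_of_nonneg h0,
              Real.norm_of_nonneg (by linarith)]
    calc ‖locTransV N m φ h u x‖ ^ p ≤ (φ x * ‖u (x + h)‖ + (1 - φ x) * ‖u x‖) ^ p :=
          Real.rpow_le_rpow (norm_nonneg _) hnorm hp0.le
      _ ≤ φ x * ‖u (x + h)‖ ^ p + (1 - φ x) * ‖u x‖ ^ p := by
          have hab : φ x + (1 - φ x) = 1 := by ring
          have hb : (0:ℝ) ≤ 1 - φ x := by linarith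
          have hcv := (convexOn_rpow hp).2 (Set.mem_Ici.2 (norm_nonneg (u (x + h))))
            (Set.mem_Ici.2 (norm_nonneg (u x))) h0 hb hab
          simpa [smul_eq_mul] using hcv
  -- integrability of the pieces
  have hF1 : Integrable (fun x => φ x * g (x + h)) :=
    Integrable.bdd_mul hgh hφc.aestronglyMeasurable (Filter.Eventually.of_forall hφb.choose_spec)
  have hF2 : Integrable (fun x => (1 - φ x) * g x) :=
    Integrable.bdd_mul hgi (continuous_const.sub hφc).aestronglyMeasurable (c := 1)
      (Filter.Eventually.of_forall fun x => by
        rw [Real.norm_eq_abs, abs_of_nonneg (by linarith [(hrange x).2])]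
        linarith [(hrange x).1])
  have hTint : Integrable (fun x => ‖locTransV N m φ h u x‖ ^ p) := by
    refine Integrable.mono' (hF1.add hF2) ?_ (Filter.Eventually.of_forall fun x => ?_)
    · exact (hTm.norm.aemeasurable.pow_const p).aestronglyMeasurable
    · rw [Real.norm_of_nonneg (Real.rpow_nonneg (norm_nonneg _) p)]
      exact key x
  have hmid : Integrable (fun x => φ x * (g (x + h) - g x)) :=
    Integrable.bdd_mul (hgh.sub hgi) hφc.aestronglyMeasurable (Filter.Eventually.of_forall hφb.choose_spec)
  -- step 1
  have step1 : ∫ x, (‖locTransV N m φ h u x‖ ^ p - g x)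
      ≤ ∫ x, φ x * (g (x + h) - g x) := by
    refine integral_mono (hTint.sub hgi) hmid fun x => ?_
    have h2 : φ x * (g (x + h) - g x)
        = φ x * g (x + h) + (1 - φ x) * g x - g x := by ring
    rw [h2]
    linarith [key x]
  -- step 2: change of variables
  have step2 : ∫ x, φ x * (g (x + h) - g x) = ∫ x, (φ (x - h) - φ x) * g x := by
    have h1 : (∫ x, φ x * g (x + h)) = ∫ x, φ (x - h) * g x := by
      have := integral_add_right_eq_self (μ := volume)
        (fun y : Euc N => φ (y - h) * g y) h
      simpa using this
    have hφsh : Continuous fun x : Euc N => φ (x - h) :=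
      hφc.comp (continuous_sub_right h)
    have hFsh : Integrable (fun x => φ (x - h) * g x) :=
      Integrable.bdd_mul hgi hφsh.aestronglyMeasurable (c := 1) (Filter.Eventually.of_forall fun x => by
        rw [Real.norm_eq_abs, abs_of_nonneg (hrange _).1]; exact (hrange _).2)
    rw [show (fun x => φ x * (g (x + h) - g x)) =
        fun x => φ x * g (x + h) - φ x * g x by funext x; ring]
    rw [integral_sub hF1 (Integrable.bdd_mul hgi hφc.aestronglyMeasurable (Filter.Eventually.of_forall hφb.choose_spec)), h1,
      ← integral_sub hFsh (Integrable.bdd_mul hgi hφc.aestronglyMeasurable (Filter.Eventually.of_forall hφb.choose_spec))]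
    congr 1; funext x; ring
  -- step 3: pointwise bound by indicator
  have hind : Integrable ((Metric.ball x₀ (3 * ρ)).indicator g) :=
    hgi.indicator measurableSet_ball
  have step3 : ∫ x, (φ (x - h) - φ x) * g x
      ≤ ∫ x, ((L : ℝ) * ‖h‖) * (Metric.ball x₀ (3 * ρ)).indicator g x := by
    refine integral_mono ?_ (hind.const_mul _) fun x => ?_
    · have hφsh : Continuous fun x : Euc N => φ (x - h) :=
        hφc.comp (continuous_sub_right h)
      exact Integrable.bdd_mul hgi (hφsh.sub hφc).aestronglyMeasurable (c := 2)
        (Filter.Eventually.of_forall fun x => by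
          have := (hrange (x - h)); have := (hrange x)
          rw [Real.norm_eq_abs, abs_sub_le_iff]
          constructor <;> linarith [(hrange (x - h)).1, (hrange (x - h)).2,
            (hrange x).1, (hrange x).2])
    · by_cases hx : x ∈ Metric.ball x₀ (3 * ρ)
      · rw [Set.indicator_of_mem hx]
        have hd : dist (x - h) x = ‖h‖ := by
          rw [dist_eq_norm]; simp
        have hL : |φ (x - h) - φ x| ≤ (L : ℝ) * ‖h‖ := by
          have := hφL.dist_le_mul (x - h) x
          rw [Real.dist_eq] at this
          rw [hd] at this
          exact this
        calc (φ (x - h) - φ x) * g x ≤ |φ (x - h) - φ x| * g x :=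
              mul_le_mul_of_nonneg_right (le_abs_self _) (hgnn x)
          _ ≤ (L : ℝ) * ‖h‖ * g x := mul_le_mul_of_nonneg_right hL (hgnn x)
      · rw [Set.indicator_of_notMem hx]
        have hx3 : 3 * ρ ≤ dist x x₀ := by
          by_contra hc; exact hx (Metric.mem_ball.2 (lt_of_not_ge hc))
        have hxz : φ x = 0 := hzero x fun hmem => by
          have := Metric.mem_ball.1 hmem; linarith
        have hxhz : φ (x - h) = 0 := by
          refine hzero (x - h) fun hmem => ?_
          have h1 : dist (x - h) x₀ < 2 * ρ := Metric.mem_ball.1 hmem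
          have h2 : dist x x₀ ≤ dist x (x - h) + dist (x - h) x₀ := dist_triangle _ _ _
          have h3 : dist x (x - h) = ‖h‖ := by rw [dist_eq_norm]; simp
          linarith
        simp [hxz, hxhz]
  -- combine
  have final : ∫ x, ((L : ℝ) * ‖h‖) * (Metric.ball x₀ (3 * ρ)).indicator g x
      = (L : ℝ) * ‖h‖ * ∫ x in Metric.ball x₀ (3 * ρ), g x := by
    rw [MeasureTheory.integral_const_mul, integral_indicator measurableSet_ball]
  calc ∫ x, (‖locTransV N m φ h u x‖ ^ p - ‖u x‖ ^ p)
      ≤ ∫ x, φ x * (g (x + h) - g x) := step1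
    _ = ∫ x, (φ (x - h) - φ x) * g x := step2
    _ ≤ ∫ x, ((L : ℝ) * ‖h‖) * (Metric.ball x₀ (3 * ρ)).indicator g x := step3
    _ = (L : ℝ) * ‖h‖ * ∫ x in Metric.ball x₀ (3 * ρ), ‖u x‖ ^ p := final
end
end

section
/- Let Ω ⊂ ℝ^N be a bounded Lipschitz domain, s ∈ (0,1), p ∈ [2,∞), f ∈ L^{p'}(Ω) with p' = p/(p−1), and let u be a minimizer over X̃^{s,p}(Ω) of 𝒥(v) := (1/p) ∫_{ℝ^N} |∇^s v|^p dx − ∫_Ω f v dx. Fix x_0 ∈ ℝ^N, ρ > 0, a cut-off φ, σ ∈ (0,1], and suppose T_{h'} u ∈ X̃^{s,p}(Ω) for all h' ∈ 𝒪_ρ(x_0) and that ω(u) := sup_{h' ∈ 𝒪_ρ(x_0), h' ≠ 0} |𝒥(T_{h'} u) − 𝒥(u)| / |h'|^σ is finite. Then there is a constant C = C(p) > 0 such that for every h ∈ 𝒪_ρ(x_0): ‖∇^s (u − T_h u)‖_{L^p(ℝ^N)}^p ≤ C ω(u) |h|^σ. -/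
open MeasureTheory Metric Real
open scoped ENNReal NNReal RealInnerProductSpace

noncomputable section

/-- `h` is an admissible outward translation direction at `x₀` (for radius `ρ`):
`|h| ≤ ρ` and `(D_{2ρ}(x₀) \ Ω) + t h ⊂ Ω^c` for all `t ∈ [0,1]`. -/
def Admissible (N : ℕ) (Ω : Set (Euc N)) (x₀ : Euc N) (ρ : ℝ) (h : Euc N) : Prop :=
  ‖h‖ ≤ ρ ∧ ∀ t ∈ Set.Icc (0 : ℝ) 1, ∀ y ∈ Metric.ball x₀ (2 * ρ) \ Ω, y + t • h ∉ Ω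

/-- A bounded Lipschitz domain, formalized through the uniform cone property (equivalent,
for bounded open sets, to having a Lipschitz boundary): `Ω` is open, bounded, nonempty, and
there are `ρ ∈ (0,1]`, `θ ∈ (0,π]` and a unit vector field `n` such that every `h` in the
cone `𝒞_ρ(n(x),θ)` is an admissible direction at `x`. -/
def IsLipschitzDomain (N : ℕ) (Ω : Set (Euc N)) : Prop :=
  IsOpen Ω ∧ Bornology.IsBounded Ω ∧ Ω.Nonempty ∧
    ∃ ρ θ : ℝ, 0 < ρ ∧ ρ ≤ 1 ∧ 0 < θ ∧ θ ≤ Real.pi ∧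
      ∃ n : Euc N → Euc N, ∀ x : Euc N, ‖n x‖ = 1 ∧
        ∀ h : Euc N, ‖h‖ ≤ ρ → ‖h‖ * Real.cos θ ≤ ⟪h, n x⟫ → Admissible N Ω x ρ h

/-- Membership in `X̃^{s,p}(Ω)`: `u ∈ L^p(ℝ^N)`, the integral defining `∇^s u` converges
absolutely a.e., `∇^s u ∈ L^p(ℝ^N; ℝ^N)`, and `u = 0` a.e. outside `Ω`. -/
def MemXtilde (N : ℕ) (s p : ℝ) (Ω : Set (Euc N)) (u : Euc N → ℝ) : Prop :=
  MemLp u (ENNReal.ofReal p) ∧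
  (∀ᵐ x ∂(volume : Measure (Euc N)), Integrable (gradIntegrand N s u x)) ∧
  MemLp (fracGrad N s u) (ENNReal.ofReal p) ∧
  (∀ᵐ x ∂(volume : Measure (Euc N)), x ∉ Ω → u x = 0)

/-- The energy functional `𝒥(v) = (1/p) ∫ |∇^s v|^p - ∫_Ω f v`. -/
def energy (N : ℕ) (s p : ℝ) (Ω : Set (Euc N)) (f v : Euc N → ℝ) : ℝ :=
  ((1 / p) * ∫ x, ‖fracGrad N s v x‖ ^ p) - ∫ x in Ω, f x * v x


section Aux

variable {N : ℕ}

private lemma rpow_add_rpow_le' {x y q : ℝ} (hx : 0 ≤ x) (hy : 0 ≤ y) (hq : 1 ≤ q) :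
    x ^ q + y ^ q ≤ (x + y) ^ q := by
  have := NNReal.add_rpow_le_rpow_add x.toNNReal y.toNNReal hq
  have h1 : ((x.toNNReal ^ q + y.toNNReal ^ q : ℝ≥0) : ℝ) ≤ (((x.toNNReal + y.toNNReal) ^ q : ℝ≥0) : ℝ) :=
    NNReal.coe_le_coe.2 this
  simpa [NNReal.coe_rpow, Real.coe_toNNReal _ hx, Real.coe_toNNReal _ hy,
    Real.coe_toNNReal _ (add_nonneg hx hy)] using h1

private lemma rpow_mean_le' {x y q : ℝ} (hx : 0 ≤ x) (hy : 0 ≤ y) (hq : 1 ≤ q) :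
    (2⁻¹ * x + 2⁻¹ * y) ^ q ≤ 2⁻¹ * x ^ q + 2⁻¹ * y ^ q := by
  have := NNReal.rpow_arith_mean_le_arith_mean2_rpow 2⁻¹ 2⁻¹ x.toNNReal y.toNNReal
    (by rw [← NNReal.coe_inj]; push_cast; norm_num) hq
  have h1 : (((2⁻¹ * x.toNNReal + 2⁻¹ * y.toNNReal : ℝ≥0) ^ q : ℝ≥0) : ℝ) ≤
      ((2⁻¹ * x.toNNReal ^ q + 2⁻¹ * y.toNNReal ^ q : ℝ≥0) : ℝ) := NNReal.coe_le_coe.2 this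
  simpa [NNReal.coe_rpow, Real.coe_toNNReal _ hx, Real.coe_toNNReal _ hy] using h1

/-- Clarkson-type pointwise inequality, `p ≥ 2`, in an inner product space. -/
private lemma clarkson (a b : Euc N) {p : ℝ} (hp : 2 ≤ p) :
    ‖(2⁻¹ : ℝ) • (a + b)‖ ^ p + ‖(2⁻¹ : ℝ) • (a - b)‖ ^ p ≤
      2⁻¹ * (‖a‖ ^ p + ‖b‖ ^ p) := by
  set A := ‖(2⁻¹ : ℝ) • (a + b)‖ with hA
  set B := ‖(2⁻¹ : ℝ) • (a - b)‖ with hB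
  have hA0 : 0 ≤ A := norm_nonneg _
  have hB0 : 0 ≤ B := norm_nonneg _
  have hq : 1 ≤ p / 2 := by linarith
  have hpar : A * A + B * B = 2⁻¹ * (‖a‖ * ‖a‖ + ‖b‖ * ‖b‖) := by
    have := parallelogram_law_with_norm ℝ a b
    have hA' : A = 2⁻¹ * ‖a + b‖ := by
      rw [hA, norm_smul]; norm_num
    have hB' : B = 2⁻¹ * ‖a - b‖ := by
      rw [hB, norm_smul]; norm_num
    rw [hA', hB']; nlinarith [this]
  have hsq : ∀ t : ℝ, 0 ≤ t → (t * t) ^ (p / 2) = t ^ p := by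
    intro t ht
    have h2 : t * t = t ^ ((2 : ℕ) : ℝ) := by rw [Real.rpow_natCast]; ring
    rw [h2, ← Real.rpow_mul ht]
    congr 1
    push_cast
    ring
  calc A ^ p + B ^ p = (A * A) ^ (p / 2) + (B * B) ^ (p / 2) := by
        rw [hsq A hA0, hsq B hB0]
    _ ≤ (A * A + B * B) ^ (p / 2) :=
        rpow_add_rpow_le' (mul_self_nonneg A) (mul_self_nonneg B) hq
    _ = (2⁻¹ * (‖a‖ * ‖a‖) + 2⁻¹ * (‖b‖ * ‖b‖)) ^ (p / 2) := by rw [hpar]; ring_nf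
    _ ≤ 2⁻¹ * (‖a‖ * ‖a‖) ^ (p / 2) + 2⁻¹ * (‖b‖ * ‖b‖) ^ (p / 2) :=
        rpow_mean_le' (mul_self_nonneg _) (mul_self_nonneg _) hq
    _ = 2⁻¹ * (‖a‖ ^ p + ‖b‖ ^ p) := by
        rw [hsq _ (norm_nonneg a), hsq _ (norm_nonneg b)]; ring

private lemma gradIntegrand_sub (s : ℝ) (u v : Euc N → ℝ) (x : Euc N) :
    gradIntegrand N s (fun y => u y - v y) x =
      fun y => gradIntegrand N s u x y - gradIntegrand N s v x y := by
  funext y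
  unfold gradIntegrand
  match_scalars <;> ring

private lemma gradIntegrand_mid (s : ℝ) (u v : Euc N → ℝ) (x : Euc N) :
    gradIntegrand N s (fun y => (2⁻¹ : ℝ) * (u y + v y)) x =
      fun y => (2⁻¹ : ℝ) • (gradIntegrand N s u x y + gradIntegrand N s v x y) := by
  funext y
  unfold gradIntegrand
  match_scalars <;> ring

private lemma fracGrad_sub (s : ℝ) (u v : Euc N → ℝ) (x : Euc N)
    (hu : Integrable (gradIntegrand N s u x)) (hv : Integrable (gradIntegrand N s v x)) :
    fracGrad N s (fun y => u y - v y) x = fracGrad N s u x - fracGrad N s v x := by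
  unfold fracGrad
  simp only [gradIntegrand_sub]
  rw [integral_sub hu hv, smul_sub]

private lemma fracGrad_mid (s : ℝ) (u v : Euc N → ℝ) (x : Euc N)
    (hu : Integrable (gradIntegrand N s u x)) (hv : Integrable (gradIntegrand N s v x)) :
    fracGrad N s (fun y => (2⁻¹ : ℝ) * (u y + v y)) x =
      (2⁻¹ : ℝ) • (fracGrad N s u x + fracGrad N s v x) := by
  unfold fracGrad
  simp only [gradIntegrand_mid]
  rw [integral_smul, integral_add hu hv]
  rw [smul_add, smul_add, smul_comm (mu N s) (2⁻¹ : ℝ), smul_comm (mu N s) (2⁻¹ : ℝ), smul_add]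

end Aux

/-- Savaré-type estimate, superquadratic case `p ≥ 2`: if `u` minimizes `𝒥` over
`X̃^{s,p}(Ω)` and `𝒥` is `(T, 𝒪_ρ(x₀), σ)`-regular at `u` with modulus bounded by `W`, then
`‖∇^s(u - T_h u)‖_{L^p}^p ≤ C(p) W |h|^σ` for every admissible `h`. -/
theorem stmt11 (p : ℝ) (hp : 2 ≤ p) :
    ∃ C : ℝ, 0 < C ∧
      ∀ (N : ℕ), 1 ≤ N →
      ∀ (Ω : Set (Euc N)), IsLipschitzDomain N Ω →
      ∀ s ∈ Set.Ioo (0 : ℝ) 1,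
      ∀ f : Euc N → ℝ, MemLp f (ENNReal.ofReal (p / (p - 1))) (volume.restrict Ω) →
      ∀ u : Euc N → ℝ, MemXtilde N s p Ω u →
        (∀ v : Euc N → ℝ, MemXtilde N s p Ω v → energy N s p Ω f u ≤ energy N s p Ω f v) →
      ∀ (x₀ : Euc N) (ρ : ℝ), 0 < ρ →
      ∀ φ : Euc N → ℝ, IsCutoff N x₀ ρ φ →
      ∀ σ ∈ Set.Ioc (0 : ℝ) 1,
        (∀ h' : Euc N, Admissible N Ω x₀ ρ h' → MemXtilde N s p Ω (locTrans N φ h' u)) →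
      ∀ W : ℝ,
        (∀ h' : Euc N, Admissible N Ω x₀ ρ h' → h' ≠ 0 →
          |energy N s p Ω f (locTrans N φ h' u) - energy N s p Ω f u| ≤ W * ‖h'‖ ^ σ) →
      ∀ h : Euc N, Admissible N Ω x₀ ρ h →
        ∫ x, ‖fracGrad N s (fun y => u y - locTrans N φ h u y) x‖ ^ p

          ≤ C * W * ‖h‖ ^ σ := by
  have hp0 : (0 : ℝ) < p := by linarith
  have hpne : p ≠ 0 := hp0.ne'
  refine ⟨p * 2 ^ (p - 1), mul_pos hp0 (Real.rpow_pos_of_pos two_pos _), ?_⟩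
  intro N hN Ω hΩ s hs f hf u hu hmin x₀ ρ hρ φ hφ σ hσ hT W hW h hadm
  by_cases h0 : h = 0
  · subst h0
    have hveq : locTrans N φ 0 u = u := by
      funext x
      simp only [locTrans, add_zero]
      ring
    rw [hveq]
    have hzf : (fun y => u y - u y) = fun _ : Euc N => (0 : ℝ) := by funext y; ring
    rw [hzf]
    have hz : ∀ x : Euc N, fracGrad N s (fun _ : Euc N => (0 : ℝ)) x = 0 := by
      intro x
      unfold fracGrad gradIntegrand
      simp
    simp [hz, Real.zero_rpow hpne, Real.zero_rpow (ne_of_gt hσ.1)]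
  · set v := locTrans N φ h u with hvdef
    obtain ⟨hu1, hu2, hu3, hu4⟩ := hu
    have hvX := hT h hadm
    rw [← hvdef] at hvX
    obtain ⟨hv1, hv2, hv3, hv4⟩ := hvX
    have hWb := hW h hadm h0
    rw [← hvdef] at hWb
    have hq0 : ENNReal.ofReal p ≠ 0 := by
      simp only [ne_eq, ENNReal.ofReal_eq_zero, not_le]
      linarith
    have hqt : ENNReal.ofReal p ≠ ⊤ := ENNReal.ofReal_ne_top
    have hqr : (ENNReal.ofReal p).toReal = p := ENNReal.toReal_ofReal hp0.le
    -- integrability of the various p-th power norms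
    have Iu_int : Integrable (fun x => ‖fracGrad N s u x‖ ^ p) := by
      have := hu3.integrable_norm_rpow hq0 hqt
      rwa [hqr] at this
    have Iv_int : Integrable (fun x => ‖fracGrad N s v x‖ ^ p) := by
      have := hv3.integrable_norm_rpow hq0 hqt
      rwa [hqr] at this
    have hmem_mid : MemLp (fun x => (2⁻¹ : ℝ) • (fracGrad N s u x + fracGrad N s v x))
        (ENNReal.ofReal p) volume := (hu3.add hv3).const_smul (2⁻¹ : ℝ)
    have hmem_d : MemLp (fun x => (2⁻¹ : ℝ) • (fracGrad N s u x - fracGrad N s v x))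
        (ENNReal.ofReal p) volume := (hu3.sub hv3).const_smul (2⁻¹ : ℝ)
    have Im_int : Integrable
        (fun x => ‖(2⁻¹ : ℝ) • (fracGrad N s u x + fracGrad N s v x)‖ ^ p) := by
      have := hmem_mid.integrable_norm_rpow hq0 hqt
      rwa [hqr] at this
    have Id_int : Integrable
        (fun x => ‖(2⁻¹ : ℝ) • (fracGrad N s u x - fracGrad N s v x)‖ ^ p) := by
      have := hmem_d.integrable_norm_rpow hq0 hqt
      rwa [hqr] at this
    -- the midpoint competitor
    set M : Euc N → ℝ := fun x => (2⁻¹ : ℝ) * (u x + v x) with hMdef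
    have hMmem : MemXtilde N s p Ω M := by
      refine ⟨(hu1.add hv1).const_mul (2⁻¹ : ℝ), ?_, ?_, ?_⟩
      · filter_upwards [hu2, hv2] with x hx1 hx2
        rw [hMdef, gradIntegrand_mid s u v x]
        exact (hx1.add hx2).smul (2⁻¹ : ℝ)
      · have hae : (fun x => (2⁻¹ : ℝ) • (fracGrad N s u x + fracGrad N s v x))
            =ᵐ[(volume : Measure (Euc N))] fracGrad N s M := by
          filter_upwards [hu2, hv2] with x hx1 hx2
          rw [hMdef, fracGrad_mid s u v x hx1 hx2]
        exact MemLp.ae_eq hae hmem_mid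
      · filter_upwards [hu4, hv4] with x hx1 hx2 hxΩ
        rw [hMdef]
        simp [hx1 hxΩ, hx2 hxΩ]
    -- integrability of f·u, f·v on Ω (Hölder)
    have hp1 : (1 : ℝ) < p := by linarith
    have hpm1 : (0 : ℝ) < p - 1 := by linarith
    have hpp : (0 : ℝ) < p / (p - 1) := by positivity
    have hpq1 : (1 : ℝ≥0∞) / 1 = 1 / ENNReal.ofReal (p / (p - 1)) + 1 / ENNReal.ofReal p := by
      rw [one_div, one_div, one_div, inv_one, ← ENNReal.ofReal_inv_of_pos hpp,
        ← ENNReal.ofReal_inv_of_pos hp0,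
        ← ENNReal.ofReal_add (by positivity) (by positivity),
        show (p / (p - 1))⁻¹ + p⁻¹ = 1 by field_simp; ring]
      exact ENNReal.ofReal_one.symm
    have hfu_int : Integrable (fun x => f x * u x) (volume.restrict Ω) := by
      have := MemLp.smul (hu1.restrict Ω) hf (hpqr := ⟨by simpa only [one_div] using hpq1.symm⟩)
      rw [memLp_one_iff_integrable] at this
      exact this
    have hfv_int : Integrable (fun x => f x * v x) (volume.restrict Ω) := by
      have := MemLp.smul (hv1.restrict Ω) hf (hpqr := ⟨by simpa only [one_div] using hpq1.symm⟩)
      rw [memLp_one_iff_integrable] at this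
      exact this
    -- rewrite the energies
    have hmin' := hmin M hMmem
    unfold energy at hmin' hWb
    have hIM : (∫ x, ‖fracGrad N s M x‖ ^ p)
        = ∫ x, ‖(2⁻¹ : ℝ) • (fracGrad N s u x + fracGrad N s v x)‖ ^ p := by
      refine integral_congr_ae ?_
      filter_upwards [hu2, hv2] with x hx1 hx2
      rw [hMdef, fracGrad_mid s u v x hx1 hx2]
    have hLM : (∫ x in Ω, f x * M x)
        = 2⁻¹ * (∫ x in Ω, f x * u x) + 2⁻¹ * (∫ x in Ω, f x * v x) := by
      rw [hMdef]
      rw [show (fun x => f x * (2⁻¹ * (u x + v x)))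
          = fun x => 2⁻¹ * (f x * u x) + 2⁻¹ * (f x * v x) from by funext x; ring]
      rw [integral_add (hfu_int.const_mul _) (hfv_int.const_mul _), integral_const_mul,
        integral_const_mul]
    rw [hIM, hLM] at hmin'
    -- Clarkson inequality integrated
    have hclark : (∫ x, ‖(2⁻¹ : ℝ) • (fracGrad N s u x + fracGrad N s v x)‖ ^ p)
          + (∫ x, ‖(2⁻¹ : ℝ) • (fracGrad N s u x - fracGrad N s v x)‖ ^ p)
        ≤ 2⁻¹ * ((∫ x, ‖fracGrad N s u x‖ ^ p) + ∫ x, ‖fracGrad N s v x‖ ^ p) := by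
      have hpt : ∀ x : Euc N,
          ‖(2⁻¹ : ℝ) • (fracGrad N s u x + fracGrad N s v x)‖ ^ p
            + ‖(2⁻¹ : ℝ) • (fracGrad N s u x - fracGrad N s v x)‖ ^ p
          ≤ 2⁻¹ * (‖fracGrad N s u x‖ ^ p + ‖fracGrad N s v x‖ ^ p) := fun x =>
        clarkson (fracGrad N s u x) (fracGrad N s v x) hp
      have hmono := integral_mono (Im_int.add Id_int) ((Iu_int.add Iv_int).const_mul 2⁻¹) hpt
      simp only [Pi.add_apply] at hmono
      rwa [integral_add Im_int Id_int, integral_const_mul, integral_add Iu_int Iv_int] at hmono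
    -- the goal integral equals 2^p times the halved difference integral
    have hgoal_eq : (∫ x, ‖fracGrad N s (fun y => u y - v y) x‖ ^ p)
        = 2 ^ p * ∫ x, ‖(2⁻¹ : ℝ) • (fracGrad N s u x - fracGrad N s v x)‖ ^ p := by
      rw [← integral_const_mul]
      refine integral_congr_ae ?_
      filter_upwards [hu2, hv2] with x hx1 hx2
      rw [fracGrad_sub s u v x hx1 hx2,
        show ‖(2⁻¹ : ℝ) • (fracGrad N s u x - fracGrad N s v x)‖
          = 2⁻¹ * ‖fracGrad N s u x - fracGrad N s v x‖ from by rw [norm_smul]; norm_num,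
        Real.mul_rpow (by norm_num) (norm_nonneg _), ← mul_assoc,
        ← Real.mul_rpow (by norm_num) (by norm_num)]
      norm_num
    -- arithmetic conclusion
    have hWb' := (le_abs_self _).trans hWb
    have e1 : (∫ x, ‖fracGrad N s u x‖ ^ p) - p * ∫ x in Ω, f x * u x
        ≤ (∫ x, ‖(2⁻¹ : ℝ) • (fracGrad N s u x + fracGrad N s v x)‖ ^ p)
          - p * (2⁻¹ * (∫ x in Ω, f x * u x) + 2⁻¹ * ∫ x in Ω, f x * v x) := by
      have h2 := mul_le_mul_of_nonneg_left hmin' hp0.le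
      have e' : p * (1 / p * (∫ x, ‖fracGrad N s u x‖ ^ p) - ∫ x in Ω, f x * u x)
          = (∫ x, ‖fracGrad N s u x‖ ^ p) - p * ∫ x in Ω, f x * u x := by
        field_simp
        try ring
      have e'' : p * (1 / p * (∫ x, ‖(2⁻¹ : ℝ) • (fracGrad N s u x + fracGrad N s v x)‖ ^ p)
            - (2⁻¹ * (∫ x in Ω, f x * u x) + 2⁻¹ * ∫ x in Ω, f x * v x))
          = (∫ x, ‖(2⁻¹ : ℝ) • (fracGrad N s u x + fracGrad N s v x)‖ ^ p)
            - p * (2⁻¹ * (∫ x in Ω, f x * u x) + 2⁻¹ * ∫ x in Ω, f x * v x) := by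
        field_simp
        try ring
      rw [e', e''] at h2
      exact h2
    have e2 : ((∫ x, ‖fracGrad N s v x‖ ^ p) - p * ∫ x in Ω, f x * v x)
          - ((∫ x, ‖fracGrad N s u x‖ ^ p) - p * ∫ x in Ω, f x * u x)
        ≤ p * (W * ‖h‖ ^ σ) := by
      have h2 := mul_le_mul_of_nonneg_left hWb' hp0.le
      have e' : p * (1 / p * (∫ x, ‖fracGrad N s v x‖ ^ p) - (∫ x in Ω, f x * v x)
            - (1 / p * (∫ x, ‖fracGrad N s u x‖ ^ p) - ∫ x in Ω, f x * u x))
          = ((∫ x, ‖fracGrad N s v x‖ ^ p) - p * ∫ x in Ω, f x * v x)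
            - ((∫ x, ‖fracGrad N s u x‖ ^ p) - p * ∫ x in Ω, f x * u x) := by
        field_simp
        try ring
      rw [e'] at h2
      exact h2
    have hfin : 2 * (∫ x, ‖(2⁻¹ : ℝ) • (fracGrad N s u x - fracGrad N s v x)‖ ^ p)
        ≤ p * (W * ‖h‖ ^ σ) := by linarith [e1, e2, hclark]
    have hK : (0 : ℝ) < 2 ^ (p - 1) := Real.rpow_pos_of_pos two_pos _
    calc (∫ x, ‖fracGrad N s (fun y => u y - v y) x‖ ^ p)
        = 2 ^ p * ∫ x, ‖(2⁻¹ : ℝ) • (fracGrad N s u x - fracGrad N s v x)‖ ^ p := hgoal_eq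
      _ = 2 ^ (p - 1) *
          (2 * ∫ x, ‖(2⁻¹ : ℝ) • (fracGrad N s u x - fracGrad N s v x)‖ ^ p) := by
          rw [show (2 : ℝ) ^ p = 2 ^ (p - 1) * 2 from by
            rw [← Real.rpow_add_one (by norm_num : (2 : ℝ) ≠ 0) (p - 1)]
            norm_num]
          ring
      _ ≤ 2 ^ (p - 1) * (p * (W * ‖h‖ ^ σ)) := mul_le_mul_of_nonneg_left hfin hK.le
      _ = p * 2 ^ (p - 1) * W * ‖h‖ ^ σ := by ring
end
end
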